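/- arXiv:2505.17588 — 3 statements merged into one kernel-verified Lean document; each statement's English description precedes it below -/
import Mathlib

section
/- The function V_ε is concave on ℝ: for every ε > 0, the piecewise function V_ε(x) = sqrt(x + (ε/2)^2) − ε/2 for x > 0 and V_ε(x) = x/ε for x ≤ 0 is a concave function of x. -/
noncomputable def Veps (ε x : ℝ) : ℝ :=
  if x > 0 then Real.sqrt (x + (ε / 2) ^ 2) - ε / 2 else x / ε

/-!
On `x ≤ 0` the function `V_ε` is the tangent line at `0` of the concave function
`x ↦ √(x + (ε/2)²) - ε/2`, so `V_ε` is differentiable everywhere with derivative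
`1 / (2 √(max x 0 + (ε/2)²))`, which is antitone.
-/

open Set

theorem HasDerivAt.ite_lt_of_eq {F : Type*} [NormedAddCommGroup F] [NormedSpace ℝ F]
    {f g : ℝ → F} {c : ℝ} {d : F} (hf : HasDerivAt f d c) (hg : HasDerivAt g d c)
    (hfg : f c = g c) : HasDerivAt (fun y => if c < y then f y else g y) d c := by
  have hright : HasDerivWithinAt (fun y => if c < y then f y else g y) d (Ici c) c := by
    refine hf.hasDerivWithinAt.congr (fun y hy => ?_) (by simp [hfg])
    rcases (mem_Ici.mp hy).eq_or_lt with rfl | hlt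
    · simp [hfg]
    · simp [hlt]
  have hleft : HasDerivWithinAt (fun y => if c < y then f y else g y) d (Iic c) c :=
    hg.hasDerivWithinAt.congr (fun y hy => by simp [not_lt.mpr (mem_Iic.mp hy)]) (by simp)
  simpa [Iic_union_Ici] using hleft.union hright

theorem hasDerivAt_sqrt_add_sq_sub {a y : ℝ} (hy : y + a ^ 2 ≠ 0) :
    HasDerivAt (fun z => √(z + a ^ 2) - a) (1 / (2 * √(y + a ^ 2))) y :=
  (((hasDerivAt_id y).add_const _).sqrt (by simpa using hy)).sub_const a

theorem hasDerivAt_Veps {ε : ℝ} (hε : 0 < ε) (x : ℝ) :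
    HasDerivAt (Veps ε) (1 / (2 * √(max x 0 + (ε / 2) ^ 2))) x := by
  have hsq : 2 * √((ε / 2) ^ 2) = ε := by rw [Real.sqrt_sq (by positivity)]; ring
  have hline (y : ℝ) : HasDerivAt (fun z => z / ε) (1 / ε) y := by
    simpa using (hasDerivAt_id y).div_const ε
  rcases lt_trichotomy x 0 with hx | rfl | hx
  · rw [max_eq_right hx.le, zero_add, hsq]
    refine (hline x).congr_of_eventuallyEq ?_
    filter_upwards [eventually_lt_nhds hx] with z hz
    simp [Veps, not_lt.mpr hz.le]
  · have hroot := hasDerivAt_sqrt_add_sq_sub (a := ε / 2) (y := 0) (by positivity)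
    rw [zero_add] at hroot
    rw [max_self, zero_add]
    refine hroot.ite_lt_of_eq ?_ (by simp [Real.sqrt_sq (by positivity : 0 ≤ ε / 2)])
    simpa [hsq] using hline 0
  · rw [max_eq_left hx.le]
    refine (hasDerivAt_sqrt_add_sq_sub (by positivity)).congr_of_eventuallyEq ?_
    filter_upwards [eventually_gt_nhds hx] with z hz
    simp [Veps, hz]

theorem stmt_5 (ε : ℝ) (hε : 0 < ε) : ConcaveOn ℝ Set.univ (Veps ε) := by
  have hderiv := hasDerivAt_Veps hε
  refine Antitone.concaveOn_univ_of_deriv (fun x => (hderiv x).differentiableAt) ?_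
  intro x y hxy
  rw [(hderiv x).deriv, (hderiv y).deriv]
  gcongr
end

section
/- Let (Ω, μ) be a finite measure space, p : Ω → ℝ measurable, and ε ∈ (0, 2]. Suppose ∫ p·V_ε(p) dμ ≤ C where V_ε(x) = sqrt(x + (ε/2)^2) − ε/2 for x > 0 and x/ε for x ≤ 0. Then ∫ |p|^(3/2) dμ ≤ μ(Ω) + (μ(Ω)·ε³)^(1/4)·C^(3/4) + C/(√2 − 1). -/
/-!
Pointwise, `|x|^{3/2} ≤ 1` on `[0, 1]`, `|x|^{3/2} ≤ x V_ε(x) / (√2 - 1)` for `x > 1` (using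
`ε ≤ 2`), and for `x ≤ 0`, where `x V_ε(x) = x² / ε`, Young's inequality gives
`|x|^{3/2} ≤ (3/4) λ x² + 1 / (4 λ³)` for every `λ > 0`. Integrating and minimising over `λ`
turns the last term into Hölder's bound `μ(Ω)^{1/4} (ε C)^{3/4}`.
-/

open MeasureTheory

lemma rpow_three_halves_eq_sqrt_pow {t : ℝ} (ht : 0 ≤ t) : t ^ ((3 : ℝ) / 2) = √t ^ 3 := by
  rw [Real.sqrt_eq_rpow, ← Real.rpow_natCast, ← Real.rpow_mul ht]
  norm_num

lemma mul_Veps_nonneg {ε : ℝ} (hε : 0 ≤ ε) (x : ℝ) : 0 ≤ x * Veps ε x := by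
  unfold Veps
  split_ifs with hx
  · have : ε / 2 ≤ √(x + (ε / 2) ^ 2) := Real.le_sqrt_of_sq_le (by linarith)
    nlinarith
  · rw [mul_div_assoc']
    exact div_nonneg (mul_self_nonneg x) hε

lemma sqrt_two_sub_one_mul_rpow_le_mul_Veps {ε x : ℝ} (hε2 : ε ≤ 2) (hx : 1 < x) :
    (√2 - 1) * x ^ ((3 : ℝ) / 2) ≤ x * Veps ε x := by
  have hV : Veps ε x = √(x + (ε / 2) ^ 2) - ε / 2 := if_pos (by linarith)
  rw [hV, rpow_three_halves_eq_sqrt_pow (by linarith)]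
  set s := √x
  have hs : s ^ 2 = x := Real.sq_sqrt (by linarith)
  have hs1 : 1 ≤ s := Real.one_le_sqrt.mpr hx.le
  have hr1 := Real.one_lt_sqrt_two
  -- squaring, `((√2 - 1) s + ε/2)² ≤ s² + (ε/2)²` reduces to `ε / 2 ≤ s`
  have key : (√2 - 1) * s + ε / 2 ≤ √(x + (ε / 2) ^ 2) := by
    apply Real.le_sqrt_of_sq_le
    have hr1' : (0 : ℝ) ≤ √2 - 1 := by linarith
    nlinarith [Real.sq_sqrt (zero_le_two : (0 : ℝ) ≤ 2),
      mul_nonneg (mul_nonneg hr1' (by linarith : 0 ≤ s)) (by linarith : 0 ≤ s - ε / 2)]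
  calc (√2 - 1) * s ^ 3 = x * ((√2 - 1) * s) := by rw [← hs]; ring
    _ ≤ x * (√(x + (ε / 2) ^ 2) - ε / 2) := by gcongr; linarith

lemma rpow_three_halves_le {t l : ℝ} (ht : 0 ≤ t) (hl : 0 < l) :
    t ^ ((3 : ℝ) / 2) ≤ 3 / 4 * l * t ^ 2 + 1 / (4 * l ^ 3) := by
  obtain ⟨s, hs, rfl⟩ : ∃ s, 0 ≤ s ∧ t = s ^ 2 :=
    ⟨√t, Real.sqrt_nonneg t, (Real.sq_sqrt ht).symm⟩
  rw [rpow_three_halves_eq_sqrt_pow ht, Real.sqrt_sq hs, ← sub_nonneg]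
  have hdiff : 3 / 4 * l * (s ^ 2) ^ 2 + 1 / (4 * l ^ 3) - s ^ 3
      = (l * s - 1) ^ 2 * (3 * (l * s) ^ 2 + 2 * (l * s) + 1) / (4 * l ^ 3) := by
    field_simp
    ring
  rw [hdiff]
  positivity

lemma abs_rpow_three_halves_le {ε l : ℝ} (hε : 0 < ε) (hε2 : ε ≤ 2) (hl : 0 < l) (x : ℝ) :
    |x| ^ ((3 : ℝ) / 2) ≤
      1 + 1 / (4 * l ^ 3) + (3 / 4 * l * ε + 1 / (√2 - 1)) * (x * Veps ε x) := by
  have hr1 := Real.one_lt_sqrt_two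
  have hxV := mul_Veps_nonneg hε.le x
  have hsmall : 0 ≤ 3 / 4 * l * ε * (x * Veps ε x) := by positivity
  have hlarge : 0 ≤ 1 / (√2 - 1) * (x * Veps ε x) :=
    mul_nonneg (one_div_nonneg.mpr (by linarith)) hxV
  have hl3 : 0 ≤ 1 / (4 * l ^ 3) := by positivity
  rw [add_mul]
  rcases le_or_gt x 0 with hneg | hpos
  · have hxV' : 3 / 4 * l * ε * (x * Veps ε x) = 3 / 4 * l * x ^ 2 := by
      rw [Veps, if_neg (by linarith)]
      field_simp
    have := rpow_three_halves_le (abs_nonneg x) hl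
    rw [sq_abs] at this
    linarith
  rcases le_or_gt x 1 with hle | hbig
  · have : |x| ^ ((3 : ℝ) / 2) ≤ 1 :=
      Real.rpow_le_one (abs_nonneg x) (by rw [abs_of_pos hpos]; exact hle) (by norm_num)
    linarith
  · have h := sqrt_two_sub_one_mul_rpow_le_mul_Veps hε2 hbig
    have h' : x ^ ((3 : ℝ) / 2) ≤ 1 / (√2 - 1) * (x * Veps ε x) := by
      rwa [one_div_mul_eq_div, le_div_iff₀' (by linarith)]
    rw [abs_of_pos hpos]
    linarith

section

variable {Ω : Type*} [MeasurableSpace Ω] {μ : Measure Ω} [IsFiniteMeasure μ] {p : Ω → ℝ}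
  {ε C : ℝ}

lemma integral_abs_rpow_three_halves_le (hε : 0 < ε) (hε2 : ε ≤ 2)
    (hint : Integrable (fun ω => p ω * Veps ε (p ω)) μ)
    (hbound : ∫ ω, p ω * Veps ε (p ω) ∂μ ≤ C) {l : ℝ} (hl : 0 < l) :
    ∫ ω, |p ω| ^ ((3 : ℝ) / 2) ∂μ ≤
      (μ Set.univ).toReal / (4 * l ^ 3) + 3 / 4 * l * (ε * C)
        + ((μ Set.univ).toReal + C / (√2 - 1)) := by
  set K := 3 / 4 * l * ε + 1 / (√2 - 1)
  have hK : 0 ≤ K :=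
    add_nonneg (by positivity) (one_div_nonneg.mpr (by linarith [Real.one_lt_sqrt_two]))
  calc ∫ ω, |p ω| ^ ((3 : ℝ) / 2) ∂μ
      ≤ ∫ ω, (1 + 1 / (4 * l ^ 3) + K * (p ω * Veps ε (p ω))) ∂μ :=
        integral_mono_of_nonneg (.of_forall fun _ => by positivity)
          ((integrable_const _).add (hint.const_mul K))
          (.of_forall fun ω => abs_rpow_three_halves_le hε hε2 hl (p ω))
    _ = (μ Set.univ).toReal * (1 + 1 / (4 * l ^ 3)) + K * ∫ ω, p ω * Veps ε (p ω) ∂μ := by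
        rw [integral_add (integrable_const _) (hint.const_mul K), integral_const,
          integral_const_mul, smul_eq_mul, measureReal_def]
    _ ≤ (μ Set.univ).toReal * (1 + 1 / (4 * l ^ 3)) + K * C := by gcongr
    _ = _ := by ring

end

lemma le_rpow_mul_rpow_add_of_forall {X A B D : ℝ} (hA : 0 ≤ A) (hB : 0 ≤ B)
    (h : ∀ l : ℝ, 0 < l → X ≤ A / (4 * l ^ 3) + 3 / 4 * l * B + D) :
    X ≤ A ^ ((1 : ℝ) / 4) * B ^ ((3 : ℝ) / 4) + D := by
  rcases hA.eq_or_lt with rfl | hA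
  · rw [Real.zero_rpow (by norm_num), zero_mul, zero_add]
    refine le_of_forall_pos_le_add fun δ hδ => ?_
    have hX := h (δ / (B + 1)) (by positivity)
    have : δ / (B + 1) * B ≤ δ := by
      rw [div_mul_eq_mul_div, div_le_iff₀ (by positivity)]
      nlinarith
    rw [zero_div, zero_add] at hX
    linarith
  rcases hB.eq_or_lt with rfl | hB
  · rw [Real.zero_rpow (by norm_num), mul_zero, zero_add]
    refine le_of_forall_pos_le_add fun δ hδ => ?_
    set l := 1 + A / (4 * δ)
    have hl : 1 ≤ l := by simp only [l]; linarith [show 0 ≤ A / (4 * δ) by positivity]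
    have hX := h l (by linarith)
    have : A / (4 * l ^ 3) ≤ δ := by
      have hAl : A ≤ 4 * δ * l := by
        simp only [l]
        rw [mul_add, mul_div_cancel₀ _ (by positivity)]
        linarith
      rw [div_le_iff₀ (by positivity)]
      nlinarith [le_self_pow₀ hl (by norm_num : 3 ≠ 0)]
    rw [mul_zero, add_zero] at hX
    linarith
  set a := A ^ ((1 : ℝ) / 4)
  set b := B ^ ((1 : ℝ) / 4)
  have ha : 0 < a := by positivity
  have hb : 0 < b := by positivity
  have hA4 : A = a ^ 4 := by
    rw [← Real.rpow_mul_natCast hA.le]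
    norm_num
  have hB3 : B ^ ((3 : ℝ) / 4) = b ^ 3 := by
    rw [← Real.rpow_mul_natCast hB.le]
    norm_num
  have hX := h (a / b) (by positivity)
  rw [hB3]
  convert hX using 2
  rw [hA4, ← Real.rpow_inv_natCast_pow hB.le (n := 4) (by norm_num),
    show ((4 : ℕ) : ℝ)⁻¹ = 1 / 4 by norm_num]
  field_simp
  ring

theorem stmt_15_general {Ω : Type*} [MeasurableSpace Ω] (μ : Measure Ω) [IsFiniteMeasure μ]
    (p : Ω → ℝ) (ε C : ℝ) (hε : 0 < ε) (hε2 : ε ≤ 2)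
    (hint1 : Integrable (fun ω => p ω * Veps ε (p ω)) μ)
    (hbound : ∫ ω, p ω * Veps ε (p ω) ∂μ ≤ C) :
    ∫ ω, |p ω| ^ ((3 : ℝ) / 2) ∂μ ≤
      (μ Set.univ).toReal + ((μ Set.univ).toReal * ε ^ 3) ^ ((1 : ℝ) / 4) * C ^ ((3 : ℝ) / 4)
        + C / (Real.sqrt 2 - 1) := by
  have hC : 0 ≤ C := (integral_nonneg fun ω => mul_Veps_nonneg hε.le (p ω)).trans hbound
  have hM := ENNReal.toReal_nonneg (a := μ Set.univ)
  have key := le_rpow_mul_rpow_add_of_forall hM (by positivity : 0 ≤ ε * C)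
    fun l hl => integral_abs_rpow_three_halves_le (μ := μ) hε hε2 hint1 hbound hl
  have hεC : ((μ Set.univ).toReal * ε ^ 3) ^ ((1 : ℝ) / 4) * C ^ ((3 : ℝ) / 4)
      = (μ Set.univ).toReal ^ ((1 : ℝ) / 4) * (ε * C) ^ ((3 : ℝ) / 4) := by
    rw [Real.mul_rpow hM (by positivity), Real.mul_rpow hε.le hC, ← Real.rpow_natCast_mul hε.le]
    norm_num
    ring
  rw [hεC]
  linarith

theorem stmt_15 {Ω : Type*} [MeasurableSpace Ω] (μ : Measure Ω) [IsFiniteMeasure μ]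
    (p : Ω → ℝ) (hp : Measurable p) (ε C : ℝ) (hε : 0 < ε) (hε2 : ε ≤ 2) (hC : 0 ≤ C)
    (hint1 : Integrable (fun ω => p ω * Veps ε (p ω)) μ)
    (hint2 : Integrable (fun ω => |p ω| ^ ((3 : ℝ) / 2)) μ)
    (hbound : ∫ ω, p ω * Veps ε (p ω) ∂μ ≤ C) :
    ∫ ω, |p ω| ^ ((3 : ℝ) / 2) ∂μ ≤
      (μ Set.univ).toReal + ((μ Set.univ).toReal * ε ^ 3) ^ ((1 : ℝ) / 4) * C ^ ((3 : ℝ) / 4)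
        + C / (Real.sqrt 2 - 1) :=
  stmt_15_general μ p ε C hε hε2 hint1 hbound
end

section
/- Lower semicontinuity of convex integrands under weak L^q convergence: let (Ω, μ) be a σ-finite measure space, H : ℝ → ℝ convex and lower semicontinuous, g_n ⇀ g weakly in L^q(μ) (1 < q < ∞), and suppose H(g_n) ⇀ h weakly in L^r(μ) (1 ≤ r < ∞). Then H(g) ≤ h almost everywhere. -/
/-! Testing both weak convergences against indicators of finite-measure sets `t` shows that every
affine minorant `ℓ ≤ H` survives the limit: integrating `ℓ (g_n) ≤ H (g_n)` over `t` gives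
`∫_t ℓ (g) ≤ ∫_t h`, hence `ℓ ∘ g ≤ h` a.e. by σ-finiteness. A convex `H : ℝ → ℝ` is the supremum
of its tangent lines at rational points, since it is continuous and its right derivative is
monotone, hence locally bounded; so countably many of these a.e. inequalities give `H ∘ g ≤ h`. -/

open MeasureTheory Filter ENNReal

open Set Topology

namespace ConvexOn

variable {H : ℝ → ℝ}

theorem add_rightDeriv_mul_sub_le (hH : ConvexOn ℝ univ H) (p y : ℝ) :
    H p + derivWithin H (Ioi p) p * (y - p) ≤ H y := by
  have hp : p ∈ interior univ := by simp
  rcases lt_trichotomy y p with hyp | rfl | hpy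
  · have hslope : slope H y p ≤ derivWithin H (Ioi p) p :=
      (hH.slope_le_leftDeriv_of_mem_interior trivial hp hyp).trans
        (hH.leftDeriv_le_rightDeriv_of_mem_interior hp)
    rw [slope_def_field, div_le_iff₀ (sub_pos.mpr hyp)] at hslope
    linarith
  · simp
  · have hslope : derivWithin H (Ioi p) p ≤ slope H p y :=
      hH.rightDeriv_le_slope_of_mem_interior hp trivial hpy
    rw [slope_def_field, le_div_iff₀ (sub_pos.mpr hpy)] at hslope
    linarith

theorem le_of_forall_rat_tangent_le (hH : ConvexOn ℝ univ H) {x c : ℝ}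
    (hc : ∀ p : ℚ, H p + derivWithin H (Ioi (p : ℝ)) p * (x - p) ≤ c) : H x ≤ c := by
  set s₀ := derivWithin H (Ioi (x - 1)) (x - 1)
  have hφ : Continuous fun y => H y + s₀ * (x - y) :=
    (continuousOn_univ.mp (hH.continuousOn isOpen_univ)).add (by fun_prop)
  refine le_of_not_gt fun hlt => ?_
  obtain ⟨a, b, ⟨hax, hxb⟩, hab⟩ := mem_nhds_iff_exists_Ioo_subset.mp
    ((hφ.isOpen_preimage _ isOpen_Ioi).mem_nhds (show c < H x + s₀ * (x - x) by simpa))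
  obtain ⟨p, hp₁, hp₂⟩ := exists_rat_btwn (max_lt hax (sub_one_lt x))
  have hcp : c < H p + s₀ * (x - p) := hab ⟨(le_max_left _ _).trans_lt hp₁, hp₂.trans hxb⟩
  -- on `(x - 1, x)` the tangent slopes are at least `s₀`, as right derivatives are monotone
  have hs₀ : s₀ ≤ derivWithin H (Ioi (p : ℝ)) p :=
    hH.monotoneOn_rightDeriv (by simp) (by simp) ((le_max_right _ _).trans hp₁.le)
  linarith [hc p, mul_le_mul_of_nonneg_right hs₀ (sub_nonneg.mpr hp₂.le)]

end ConvexOn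

namespace MeasureTheory

variable {Ω : Type*} [MeasurableSpace Ω] {μ : Measure Ω}

theorem MemLp.integrableOn_of_measure_lt_top {E : Type*} [NormedAddCommGroup E] {f : Ω → E}
    {p : ℝ≥0∞} (hf : MemLp f p μ) (hp : 1 ≤ p) {t : Set Ω} (ht : μ t < ∞) : IntegrableOn f t μ :=
  have : Fact (μ t < ∞) := ⟨ht⟩
  (hf.restrict t).integrable hp

theorem integral_mul_indicator_one (f : Ω → ℝ) {t : Set Ω} (ht : MeasurableSet t) :
    ∫ ω, f ω * t.indicator (fun _ => 1) ω ∂μ = ∫ ω in t, f ω ∂μ := by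
  rw [← integral_indicator ht]
  congr 1 with ω
  by_cases hω : ω ∈ t <;> simp [hω]

theorem tendsto_setIntegral_of_tendsto_integral_mul {ι : Type*} {l : Filter ι} {p : ℝ≥0∞}
    {f : ι → Ω → ℝ} {g : Ω → ℝ}
    (hfg : ∀ φ : Ω → ℝ, MemLp φ p μ →
      Tendsto (fun i => ∫ ω, f i ω * φ ω ∂μ) l (𝓝 (∫ ω, g ω * φ ω ∂μ)))
    {t : Set Ω} (ht : MeasurableSet t) (hμt : μ t < ∞) :
    Tendsto (fun i => ∫ ω in t, f i ω ∂μ) l (𝓝 (∫ ω in t, g ω ∂μ)) := by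
  simpa only [integral_mul_indicator_one _ ht] using
    hfg _ (memLp_indicator_const p ht 1 (Or.inr hμt.ne))

theorem ae_le_of_tendsto_setIntegral [SigmaFinite μ] {ι : Type*} {l : Filter ι} [l.NeBot]
    {u v : ι → Ω → ℝ} {u₀ v₀ : Ω → ℝ}
    (hu : ∀ i t, MeasurableSet t → μ t < ∞ → IntegrableOn (u i) t μ)
    (hv : ∀ i t, MeasurableSet t → μ t < ∞ → IntegrableOn (v i) t μ)
    (hu₀ : ∀ t, MeasurableSet t → μ t < ∞ → IntegrableOn u₀ t μ)
    (hv₀ : ∀ t, MeasurableSet t → μ t < ∞ → IntegrableOn v₀ t μ)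
    (huv : ∀ i, u i ≤ᵐ[μ] v i)
    (hu_lim : ∀ t, MeasurableSet t → μ t < ∞ →
      Tendsto (fun i => ∫ ω in t, u i ω ∂μ) l (𝓝 (∫ ω in t, u₀ ω ∂μ)))
    (hv_lim : ∀ t, MeasurableSet t → μ t < ∞ →
      Tendsto (fun i => ∫ ω in t, v i ω ∂μ) l (𝓝 (∫ ω in t, v₀ ω ∂μ))) :
    u₀ ≤ᵐ[μ] v₀ := by
  rw [← eventually_sub_nonneg]
  refine ae_nonneg_of_forall_setIntegral_nonneg_of_sigmaFinite
    (fun t ht hμt => (hv₀ t ht hμt).sub (hu₀ t ht hμt)) fun t ht hμt => ?_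
  rw [integral_sub' (hv₀ t ht hμt) (hu₀ t ht hμt), sub_nonneg]
  exact le_of_tendsto_of_tendsto' (hu_lim t ht hμt) (hv_lim t ht hμt) fun i =>
    setIntegral_mono_ae (hu i t ht hμt) (hv i t ht hμt) (huv i)

theorem setIntegral_mul_add_const {f : Ω → ℝ} {t : Set Ω} (hf : IntegrableOn f t μ)
    (ht : μ t < ∞) (a b : ℝ) :
    ∫ ω in t, (a * f ω + b) ∂μ = a * ∫ ω in t, f ω ∂μ + μ.real t * b := by
  rw [integral_add (hf.const_mul a) (integrableOn_const ht.ne), integral_const_mul,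
    setIntegral_const, smul_eq_mul]

theorem ae_mul_add_le_of_tendsto_setIntegral [SigmaFinite μ] {ι : Type*} {l : Filter ι}
    [l.NeBot] {H : ℝ → ℝ} {a b : ℝ} (hab : ∀ x, a * x + b ≤ H x) {f : ι → Ω → ℝ} {g h : Ω → ℝ}
    (hf : ∀ i t, MeasurableSet t → μ t < ∞ → IntegrableOn (f i) t μ)
    (hHf : ∀ i t, MeasurableSet t → μ t < ∞ → IntegrableOn (fun ω => H (f i ω)) t μ)
    (hg : ∀ t, MeasurableSet t → μ t < ∞ → IntegrableOn g t μ)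
    (hh : ∀ t, MeasurableSet t → μ t < ∞ → IntegrableOn h t μ)
    (hf_lim : ∀ t, MeasurableSet t → μ t < ∞ →
      Tendsto (fun i => ∫ ω in t, f i ω ∂μ) l (𝓝 (∫ ω in t, g ω ∂μ)))
    (hHf_lim : ∀ t, MeasurableSet t → μ t < ∞ →
      Tendsto (fun i => ∫ ω in t, H (f i ω) ∂μ) l (𝓝 (∫ ω in t, h ω ∂μ))) :
    ∀ᵐ ω ∂μ, a * g ω + b ≤ h ω := by
  refine ae_le_of_tendsto_setIntegral (u := fun i ω => a * f i ω + b)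
    (fun i t ht hμt => ((hf i t ht hμt).const_mul a).add (integrableOn_const hμt.ne)) hHf
    (fun t ht hμt => ((hg t ht hμt).const_mul a).add (integrableOn_const hμt.ne)) hh
    (fun i => ae_of_all _ fun ω => hab (f i ω)) (fun t ht hμt => ?_) hHf_lim
  rw [setIntegral_mul_add_const (hg t ht hμt) hμt]
  exact (((hf_lim t ht hμt).const_mul a).add_const _).congr fun i =>
    (setIntegral_mul_add_const (hf i t ht hμt) hμt a b).symm

end MeasureTheory

theorem stmt_17_general {Ω : Type*} [MeasurableSpace Ω] (μ : Measure Ω) [SigmaFinite μ]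
    (H : ℝ → ℝ) (hconv : ConvexOn ℝ Set.univ H)
    (q r q' r' : ℝ≥0∞) (hq : 1 < q) (hr : 1 ≤ r)
    (gn : ℕ → Ω → ℝ) (g : Ω → ℝ) (h : Ω → ℝ)
    (hgn : ∀ n, MemLp (gn n) q μ) (hg : MemLp g q μ)
    (hHgn : ∀ n, MemLp (fun ω => H (gn n ω)) r μ) (hh : MemLp h r μ)
    (hweakg : ∀ φ : Ω → ℝ, MemLp φ q' μ →
      Tendsto (fun n => ∫ ω, gn n ω * φ ω ∂μ) atTop (nhds (∫ ω, g ω * φ ω ∂μ)))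
    (hweakH : ∀ φ : Ω → ℝ, MemLp φ r' μ →
      Tendsto (fun n => ∫ ω, H (gn n ω) * φ ω ∂μ) atTop (nhds (∫ ω, h ω * φ ω ∂μ))) :
    ∀ᵐ ω ∂μ, H (g ω) ≤ h ω := by
  have integrableOn {f : Ω → ℝ} {p : ℝ≥0∞} (hf : MemLp f p μ) (hp : 1 ≤ p) :
      ∀ t, MeasurableSet t → μ t < ∞ → IntegrableOn f t μ :=
    fun _ _ hμt => hf.integrableOn_of_measure_lt_top hp hμt
  have below_tangent (p : ℚ) :
      ∀ᵐ ω ∂μ, H p + derivWithin H (Ioi (p : ℝ)) p * (g ω - p) ≤ h ω := by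
    set s := derivWithin H (Ioi (p : ℝ)) p
    have hae := ae_mul_add_le_of_tendsto_setIntegral (a := s) (b := H p - s * p)
      (fun x => by linarith [hconv.add_rightDeriv_mul_sub_le p x])
      (fun n => integrableOn (hgn n) hq.le) (fun n => integrableOn (hHgn n) hr)
      (integrableOn hg hq.le) (integrableOn hh hr)
      (fun _ ht hμt => tendsto_setIntegral_of_tendsto_integral_mul hweakg ht hμt)
      (fun _ ht hμt => tendsto_setIntegral_of_tendsto_integral_mul hweakH ht hμt)
    filter_upwards [hae] with ω hω
    linarith
  filter_upwards [ae_all_iff.mpr below_tangent] with ω hω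
  exact hconv.le_of_forall_rat_tangent_le hω

theorem stmt_17 {Ω : Type*} [MeasurableSpace Ω] (μ : Measure Ω) [SigmaFinite μ]
    (H : ℝ → ℝ) (hconv : ConvexOn ℝ Set.univ H) (hlsc : LowerSemicontinuous H)
    (q r q' r' : ℝ≥0∞) (hq : 1 < q) (hq' : q < ⊤) (hr : 1 ≤ r) (hr' : r < ⊤)
    (hqq' : q⁻¹ + q'⁻¹ = 1) (hrr' : r⁻¹ + r'⁻¹ = 1)
    (gn : ℕ → Ω → ℝ) (g : Ω → ℝ) (h : Ω → ℝ)
    (hgn : ∀ n, MemLp (gn n) q μ) (hg : MemLp g q μ)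
    (hHgn : ∀ n, MemLp (fun ω => H (gn n ω)) r μ) (hh : MemLp h r μ)
    (hweakg : ∀ φ : Ω → ℝ, MemLp φ q' μ →
      Tendsto (fun n => ∫ ω, gn n ω * φ ω ∂μ) atTop (nhds (∫ ω, g ω * φ ω ∂μ)))
    (hweakH : ∀ φ : Ω → ℝ, MemLp φ r' μ →
      Tendsto (fun n => ∫ ω, H (gn n ω) * φ ω ∂μ) atTop (nhds (∫ ω, h ω * φ ω ∂μ))) :
    ∀ᵐ ω ∂μ, H (g ω) ≤ h ω :=
  stmt_17_general μ H hconv q r q' r' hq hr gn g h hgn hg hHgn hh hweakg hweakH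
end
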